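/- arXiv:1807.08298 — 10 statements merged into one kernel-verified Lean document; each statement's English description precedes it below -/
import Mathlib

section
/- Let (x_1,x_2,x_3,x_4) ∈ (ℝ_{>0})^4 and let λ, λ' ∈ (ℝ_{>0})^6 (indexed by the edges a,...,f as above) satisfy Φ(λ') = r·Φ(λ) for some r > 0, where Φ is the triangle-product map. Then there exist μ_1, μ_2, μ_3 > 0 such that λ'(e) = μ_i μ_j λ(e) whenever edge e joins vertices v_i and v_j (with a,d joining v_1 v_2; b,e joining v_2 v_3; c,f joining v_3 v_1). -/
/-!
Divide each primed length by the unprimed one. The ratios α, …, φ then have all four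
triangle products equal to r, and comparing these products pairwise forces opposite edges
(a, d), (b, e), (c, f) to carry equal ratios. Positive weights α, β, γ on the three edges
of a triangle are always vertex products: take μ₁ = √(αγ/β) and cyclically.
-/

lemma exists_vertex_products_eq {α β γ : ℝ} (hα : 0 < α) (hβ : 0 < β) (hγ : 0 < γ) :
    ∃ μ₁ μ₂ μ₃ : ℝ, 0 < μ₁ ∧ 0 < μ₂ ∧ 0 < μ₃ ∧
      μ₁ * μ₂ = α ∧ μ₂ * μ₃ = β ∧ μ₃ * μ₁ = γ := by
  have sqrt_mul_sqrt {x y z : ℝ} (hx : 0 < x) (hy : 0 < y) (h : x * y = z ^ 2)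
      (hz : 0 < z) : √x * √y = z := by
    rw [← Real.sqrt_mul hx.le, h, Real.sqrt_sq hz.le]
  refine ⟨√(α * γ / β), √(α * β / γ), √(β * γ / α), by positivity, by positivity,
    by positivity, sqrt_mul_sqrt (by positivity) (by positivity) ?_ hα,
    sqrt_mul_sqrt (by positivity) (by positivity) ?_ hβ,
    sqrt_mul_sqrt (by positivity) (by positivity) ?_ hγ⟩ <;> field_simp

lemma opposite_eq_of_triangle_products_eq {α β γ δ ε φ r : ℝ}
    (hα : 0 < α) (hβ : 0 < β) (hγ : 0 < γ) (hδ : 0 < δ) (hε : 0 < ε) (hφ : 0 < φ)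
    (e₁ : β * δ * φ = r) (e₂ : γ * δ * ε = r) (e₃ : α * ε * φ = r)
    (e₄ : α * β * γ = r) :
    δ = α ∧ ε = β ∧ φ = γ := by
  have e₁₃ : β * δ = α * ε := mul_right_cancel₀ hφ.ne' (by linear_combination e₁ - e₃)
  have e₂₄ : δ * ε = α * β := mul_right_cancel₀ hγ.ne' (by linear_combination e₂ - e₄)
  have hδα : δ = α := by
    have hsq : δ ^ 2 * (β * ε) = α ^ 2 * (β * ε) := by
      linear_combination δ * ε * e₁₃ + α * ε * e₂₄
    exact (sq_eq_sq₀ hδ.le hα.le).1 (mul_right_cancel₀ (by positivity) hsq)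
  have hεβ : ε = β := mul_left_cancel₀ hα.ne' (by linear_combination -e₁₃ + β * hδα)
  have hφγ : φ = γ := mul_left_cancel₀ (mul_pos hα hβ).ne'
    (by linear_combination e₁ - e₄ - β * φ * hδα)
  exact ⟨hδα, hεβ, hφγ⟩

theorem stmt1_general (la lb lc ld le lf la' lb' lc' ld' le' lf' r : ℝ)
    (hla : 0 < la) (hlb : 0 < lb) (hlc : 0 < lc) (hld : 0 < ld) (hle : 0 < le)
    (hlf : 0 < lf)
    (hla' : 0 < la') (hlb' : 0 < lb') (hlc' : 0 < lc') (hld' : 0 < ld')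
    (hle' : 0 < le') (hlf' : 0 < lf')
    (h1 : lb' * ld' * lf' = r * (lb * ld * lf))
    (h2 : lc' * ld' * le' = r * (lc * ld * le))
    (h3 : la' * le' * lf' = r * (la * le * lf))
    (h4 : la' * lb' * lc' = r * (la * lb * lc)) :
    ∃ μ1 μ2 μ3 : ℝ, 0 < μ1 ∧ 0 < μ2 ∧ 0 < μ3 ∧
      la' = μ1 * μ2 * la ∧ ld' = μ1 * μ2 * ld ∧
      lb' = μ2 * μ3 * lb ∧ le' = μ2 * μ3 * le ∧
      lc' = μ3 * μ1 * lc ∧ lf' = μ3 * μ1 * lf := by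
  obtain ⟨hda, heb, hfc⟩ := opposite_eq_of_triangle_products_eq
    (div_pos hla' hla) (div_pos hlb' hlb) (div_pos hlc' hlc) (div_pos hld' hld)
    (div_pos hle' hle) (div_pos hlf' hlf) (r := r)
    (by field_simp; linear_combination h1) (by field_simp; linear_combination h2)
    (by field_simp; linear_combination h3) (by field_simp; linear_combination h4)
  obtain ⟨μ1, μ2, μ3, hμ1, hμ2, hμ3, hab, hbc, hca⟩ :=
    exists_vertex_products_eq (div_pos hla' hla) (div_pos hlb' hlb) (div_pos hlc' hlc)
  refine ⟨μ1, μ2, μ3, hμ1, hμ2, hμ3, ?_, ?_, ?_, ?_, ?_, ?_⟩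
  · exact (div_eq_iff hla.ne').1 hab.symm
  · exact (div_eq_iff hld.ne').1 (hda.trans hab.symm)
  · exact (div_eq_iff hlb.ne').1 hbc.symm
  · exact (div_eq_iff hle.ne').1 (heb.trans hbc.symm)
  · exact (div_eq_iff hlc.ne').1 hca.symm
  · exact (div_eq_iff hlf.ne').1 (hfc.trans hca.symm)

/-- If two positive edge-length vectors have proportional triangle products
(Φ(λ') = r·Φ(λ)), then they differ by the vertex action: λ'(e) = μ_i μ_j λ(e)
whenever the edge e joins the vertices v_i and v_j (a, d join v₁v₂; b, e join v₂v₃;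
c, f join v₃v₁). -/
theorem stmt1 (la lb lc ld le lf la' lb' lc' ld' le' lf' r : ℝ)
    (hla : 0 < la) (hlb : 0 < lb) (hlc : 0 < lc) (hld : 0 < ld) (hle : 0 < le)
    (hlf : 0 < lf)
    (hla' : 0 < la') (hlb' : 0 < lb') (hlc' : 0 < lc') (hld' : 0 < ld')
    (hle' : 0 < le') (hlf' : 0 < lf') (hr : 0 < r)
    (h1 : lb' * ld' * lf' = r * (lb * ld * lf))
    (h2 : lc' * ld' * le' = r * (lc * ld * le))
    (h3 : la' * le' * lf' = r * (la * le * lf))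
    (h4 : la' * lb' * lc' = r * (la * lb * lc)) :
    ∃ μ1 μ2 μ3 : ℝ, 0 < μ1 ∧ 0 < μ2 ∧ 0 < μ3 ∧
      la' = μ1 * μ2 * la ∧ ld' = μ1 * μ2 * ld ∧
      lb' = μ2 * μ3 * lb ∧ le' = μ2 * μ3 * le ∧
      lc' = μ3 * μ1 * lc ∧ lf' = μ3 * μ1 * lf :=
  stmt1_general la lb lc ld le lf la' lb' lc' ld' le' lf' r hla hlb hlc hld hle hlf hla' hlb' hlc'
    hld' hle' hlf' h1 h2 h3 h4
end

section
/- For positive reals X_1, X_2, X_3, X_4 with X_4 ≥ X_3 ≥ X_2 ≥ X_1 and X_4 ≥ X_1 + X_2 + X_3, define X_1' = ((−X_1+X_2+X_3)/X_4)·X_1, X_2' = ((X_1−X_2+X_3)/X_4)·X_2, X_3' = (|X_1+X_2−X_3|/X_4)·X_3, X_4' = (−X_1+X_2+X_3)(X_1−X_2+X_3)|X_1+X_2−X_3|/X_4² (assuming −X_1+X_2+X_3 > 0, X_1−X_2+X_3 > 0, X_1+X_2−X_3 ≠ 0). Then X_1' + X_2' + X_3' ≥ X_4'. -/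
/-!
Write `a = -X₁+X₂+X₃`, `b = X₁-X₂+X₃`, `c = |X₁+X₂-X₃|`. Then `a ≤ X₄` (by maximality of
`X₄`) and `b ≤ X₃` (as `X₁ ≤ X₂`), so `a b c ≤ X₄ X₃ c ≤ X₄ (a X₁ + b X₂ + c X₃)`;
dividing by `X₄²` gives the claim.
-/

theorem mul_mul_le_mul_add_add {a b c x y z w : ℝ} (ha : 0 ≤ a) (hb : 0 ≤ b) (hc : 0 ≤ c)
    (hx : 0 ≤ x) (hy : 0 ≤ y) (haw : a ≤ w) (hbz : b ≤ z) :
    a * b * c ≤ w * (a * x + b * y + c * z) :=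
  calc a * b * c ≤ w * z * c := by gcongr; linarith
    _ = w * (c * z) := by ring
    _ ≤ w * (a * x + b * y + c * z) := by
      have : 0 ≤ a * x + b * y := by positivity
      exact mul_le_mul_of_nonneg_left (by linarith) (ha.trans haw)

theorem mul_mul_div_sq_le_div_mul_add {a b c x y z w : ℝ} (hw : 0 < w) (ha : 0 ≤ a)
    (hb : 0 ≤ b) (hc : 0 ≤ c) (hx : 0 ≤ x) (hy : 0 ≤ y) (haw : a ≤ w)
    (hbz : b ≤ z) :
    a * b * c / w ^ 2 ≤ a / w * x + b / w * y + c / w * z := by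
  have hsum : a / w * x + b / w * y + c / w * z = w * (a * x + b * y + c * z) / w ^ 2 := by
    field_simp
  rw [hsum]
  exact div_le_div_of_nonneg_right (mul_mul_le_mul_add_add ha hb hc hx hy haw hbz)
    (by positivity)

theorem stmt3_general (X1 X2 X3 X4 : ℝ)
    (h1 : 0 < X1) (h2 : 0 < X2) (h4 : 0 < X4)
    (h12 : X1 ≤ X2)
    (hmax : X1 + X2 + X3 ≤ X4)
    (ha : 0 < -X1 + X2 + X3) (hb : 0 < X1 - X2 + X3) :
    ((-X1 + X2 + X3) / X4) * X1 + ((X1 - X2 + X3) / X4) * X2 +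
      (|X1 + X2 - X3| / X4) * X3 ≥
    (-X1 + X2 + X3) * (X1 - X2 + X3) * |X1 + X2 - X3| / X4 ^ 2 :=
  mul_mul_div_sq_le_div_mul_add h4 ha.le hb.le (abs_nonneg _) h1.le h2.le
    (by linarith) (by linarith)

/-- After a triangle switch along the maximal triangle (Euler class 1),
the new coordinates satisfy X₁' + X₂' + X₃' ≥ X₄'. -/
theorem stmt3 (X1 X2 X3 X4 : ℝ)
    (h1 : 0 < X1) (h2 : 0 < X2) (h3 : 0 < X3) (h4 : 0 < X4)
    (h12 : X1 ≤ X2) (h23 : X2 ≤ X3) (h34 : X3 ≤ X4)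
    (hmax : X1 + X2 + X3 ≤ X4)
    (ha : 0 < -X1 + X2 + X3) (hb : 0 < X1 - X2 + X3) (hc : X1 + X2 - X3 ≠ 0) :
    ((-X1 + X2 + X3) / X4) * X1 + ((X1 - X2 + X3) / X4) * X2 +
      (|X1 + X2 - X3| / X4) * X3 ≥
    (-X1 + X2 + X3) * (X1 - X2 + X3) * |X1 + X2 - X3| / X4 ^ 2 :=
  stmt3_general X1 X2 X3 X4 h1 h2 h4 h12 hmax ha hb
end

section
/- Let X_1, X_2, X_3, X_4 > 0 with X_4 ≥ X_3 ≥ X_2 ≥ X_1, X_4 ≥ X_1 + X_2 + X_3, and X_1 + X_2 ≥ X_3, and suppose −X_1+X_2+X_3 > 0 and X_1−X_2+X_3 > 0. Define X_i' as in the triangle switch formulas (X_1' = (−X_1+X_2+X_3)X_1/X_4, X_2' = (X_1−X_2+X_3)X_2/X_4, X_3' = (X_1+X_2−X_3)X_3/X_4, X_4' = (−X_1+X_2+X_3)(X_1−X_2+X_3)(X_1+X_2−X_3)/X_4²). Then (X_1', X_2', X_3', X_4') satisfies the generalized triangle inequalities: each coordinate is at most the sum of the other three. -/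
/-! In the variables `a = -X₁ + X₂ + X₃`, `b = X₁ - X₂ + X₃`, `c = X₁ + X₂ - X₃` one has
`X₁ = (b + c) / 2`, `X₂ = (a + c) / 2`, `X₃ = (a + b) / 2`, so after scaling by `2 X₄²` the switched
coordinates become `a (b + c) X₄`, `b (a + c) X₄`, `c (a + b) X₄` and `2abc`. Each of the first three
inequalities then has slack `2 (bc, ac or ab) X₄ + 2abc ≥ 0`, and the last one follows from
`c ≤ a + b + c ≤ X₄`. -/

def SatisfiesGTI (x₁ x₂ x₃ x₄ : ℝ) : Prop :=
  x₁ ≤ x₂ + x₃ + x₄ ∧ x₂ ≤ x₁ + x₃ + x₄ ∧ x₃ ≤ x₁ + x₂ + x₄ ∧ x₄ ≤ x₁ + x₂ + x₃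

theorem satisfiesGTI_mul_iff {t : ℝ} (ht : 0 < t) (x₁ x₂ x₃ x₄ : ℝ) :
    SatisfiesGTI (t * x₁) (t * x₂) (t * x₃) (t * x₄) ↔ SatisfiesGTI x₁ x₂ x₃ x₄ := by
  simp only [SatisfiesGTI, ← mul_add, mul_le_mul_iff_right₀ ht]

theorem satisfiesGTI_of_add_le {a b c d : ℝ} (ha : 0 < a) (hb : 0 < b) (hc : 0 ≤ c)
    (hd : a + b + c ≤ d) :
    SatisfiesGTI (a * (b + c) * d) (b * (a + c) * d) (c * (a + b) * d) (2 * a * b * c) := by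
  have hd₀ : 0 ≤ d := by linarith
  have habc : 0 ≤ a * b * c := by positivity
  have hab : 0 ≤ a * b * d := by positivity
  have hbc : 0 ≤ b * c * d := by positivity
  have hac : 0 ≤ a * c * d := by positivity
  have hcd : a * b * c ≤ a * b * d := mul_le_mul_of_nonneg_left (by linarith) (by positivity)
  refine ⟨?_, ?_, ?_, ?_⟩ <;> linarith

theorem stmt4_general (X1 X2 X3 X4 : ℝ)
    (hmax : X1 + X2 + X3 ≤ X4) (hI : X1 + X2 ≥ X3)
    (ha : 0 < -X1 + X2 + X3) (hb : 0 < X1 - X2 + X3) :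
    let X1' := (-X1 + X2 + X3) * X1 / X4
    let X2' := (X1 - X2 + X3) * X2 / X4
    let X3' := (X1 + X2 - X3) * X3 / X4
    let X4' := (-X1 + X2 + X3) * (X1 - X2 + X3) * (X1 + X2 - X3) / X4 ^ 2
    X1' ≤ X2' + X3' + X4' ∧ X2' ≤ X1' + X3' + X4' ∧
      X3' ≤ X1' + X2' + X4' ∧ X4' ≤ X1' + X2' + X3' := by
  intro X1' X2' X3' X4'
  have hX4 : 0 < X4 := by linarith
  have key := (satisfiesGTI_mul_iff (t := 1 / (2 * X4 ^ 2)) (by positivity) _ _ _ _).mpr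
    (satisfiesGTI_of_add_le (c := X1 + X2 - X3) ha hb (by linarith) (by linarith))
  show SatisfiesGTI X1' X2' X3' X4'
  convert key using 1 <;> (simp only [X1', X2', X3', X4']; field_simp <;> ring)

/-- Case I of the trace reduction algorithm (Euler class ±1): if X₁ + X₂ ≥ X₃,
the coordinates after the triangle switch satisfy the generalized triangle
inequalities. -/
theorem stmt4 (X1 X2 X3 X4 : ℝ)
    (h1 : 0 < X1) (h2 : 0 < X2) (h3 : 0 < X3) (h4 : 0 < X4)
    (h12 : X1 ≤ X2) (h23 : X2 ≤ X3) (h34 : X3 ≤ X4)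
    (hmax : X1 + X2 + X3 ≤ X4) (hI : X1 + X2 ≥ X3)
    (ha : 0 < -X1 + X2 + X3) (hb : 0 < X1 - X2 + X3) :
    let X1' := (-X1 + X2 + X3) * X1 / X4
    let X2' := (X1 - X2 + X3) * X2 / X4
    let X3' := (X1 + X2 - X3) * X3 / X4
    let X4' := (-X1 + X2 + X3) * (X1 - X2 + X3) * (X1 + X2 - X3) / X4 ^ 2
    X1' ≤ X2' + X3' + X4' ∧ X2' ≤ X1' + X3' + X4' ∧
      X3' ≤ X1' + X2' + X4' ∧ X4' ≤ X1' + X2' + X3' :=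
  stmt4_general X1 X2 X3 X4 hmax hI ha hb
end

section
/- Let X_1, X_2, X_3, X_4 > 0 with X_4 ≥ X_3 ≥ X_2 ≥ X_1, X_4 ≥ X_1 + X_2 + X_3, and X_1 + X_2 < X_3. Define X_1', X_2', X_3', X_4' by the triangle switch formulas (with |X_1+X_2−X_3| = X_3−X_1−X_2). Then X_1' + X_3' − X_2' = ((X_3−X_2)² − X_1²)/X_4 > 0, and consequently X_1' + X_3' + X_4' > X_2' and X_2' + X_3' + X_4' > X_1'. -/
/-!
Both `X₁' + X₃' - X₂'` and `X₂' + X₃' - X₁'` are, after clearing the common denominator `X₄`,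
differences of squares, `(X₃ - X₂)² - X₁²` and `(X₃ - X₁)² - X₂²`, which are positive precisely
because `X₃ > X₁ + X₂`. The same inequality makes all three factors of `X₄'` positive, so adding
`X₄' > 0` gives the two triangle-type inequalities.
-/

theorem sq_sub_sq_pos_of_add_lt {R : Type*} [CommRing R] [LinearOrder R] [IsStrictOrderedRing R]
    {a b c : R} (ha : 0 ≤ a) (h : a + b < c) : 0 < (c - b) ^ 2 - a ^ 2 :=
  sub_pos.mpr (pow_lt_pow_left₀ (by linarith) ha two_ne_zero)

theorem stmt5_general (X1 X2 X3 X4 : ℝ)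
    (h1 : 0 < X1) (h2 : 0 < X2) (h4 : 0 < X4)
    (hII : X1 + X2 < X3) :
    let X1' := (-X1 + X2 + X3) * X1 / X4
    let X2' := (X1 - X2 + X3) * X2 / X4
    let X3' := (X3 - X1 - X2) * X3 / X4
    let X4' := (-X1 + X2 + X3) * (X1 - X2 + X3) * (X3 - X1 - X2) / X4 ^ 2
    X1' + X3' - X2' = ((X3 - X2) ^ 2 - X1 ^ 2) / X4 ∧
      0 < X1' + X3' - X2' ∧
      X2' < X1' + X3' + X4' ∧ X1' < X2' + X3' + X4' := by
  intro X1' X2' X3' X4'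
  have hdiff₁ : X1' + X3' - X2' = ((X3 - X2) ^ 2 - X1 ^ 2) / X4 := by
    simp only [X1', X2', X3']
    ring
  have hdiff₂ : X2' + X3' - X1' = ((X3 - X1) ^ 2 - X2 ^ 2) / X4 := by
    simp only [X1', X2', X3']
    ring
  have hpos₁ : 0 < X1' + X3' - X2' :=
    hdiff₁ ▸ div_pos (sq_sub_sq_pos_of_add_lt h1.le hII) h4
  have hpos₂ : 0 < X2' + X3' - X1' :=
    hdiff₂ ▸ div_pos (sq_sub_sq_pos_of_add_lt h2.le (by linarith)) h4
  have hX4' : 0 < X4' := by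
    have : 0 < -X1 + X2 + X3 := by linarith
    have : 0 < X1 - X2 + X3 := by linarith
    have : 0 < X3 - X1 - X2 := by linarith
    positivity
  exact ⟨hdiff₁, hpos₁, by linarith, by linarith⟩

/-- Case II of the trace reduction algorithm (Euler class ±1): if X₁ + X₂ < X₃,
then X₁' + X₃' − X₂' = ((X₃−X₂)² − X₁²)/X₄ > 0, and consequently
X₁' + X₃' + X₄' > X₂' and X₂' + X₃' + X₄' > X₁'. -/
theorem stmt5 (X1 X2 X3 X4 : ℝ)
    (h1 : 0 < X1) (h2 : 0 < X2) (h3 : 0 < X3) (h4 : 0 < X4)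
    (h12 : X1 ≤ X2) (h23 : X2 ≤ X3) (h34 : X3 ≤ X4)
    (hmax : X1 + X2 + X3 ≤ X4) (hII : X1 + X2 < X3) :
    let X1' := (-X1 + X2 + X3) * X1 / X4
    let X2' := (X1 - X2 + X3) * X2 / X4
    let X3' := (X3 - X1 - X2) * X3 / X4
    let X4' := (-X1 + X2 + X3) * (X1 - X2 + X3) * (X3 - X1 - X2) / X4 ^ 2
    X1' + X3' - X2' = ((X3 - X2) ^ 2 - X1 ^ 2) / X4 ∧
      0 < X1' + X3' - X2' ∧
      X2' < X1' + X3' + X4' ∧ X1' < X2' + X3' + X4' :=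
  stmt5_general X1 X2 X3 X4 h1 h2 h4 hII
end

section
/- Let X_1, X_2, X_3, X_4 > 0 with X_4 ≥ X_3 ≥ X_2 ≥ X_1, X_4 ≥ X_1 + X_2 + X_3, and X_1 + X_2 < X_3. With the triangle switch formulas, one has (X_1' + X_2')/X_3' ≥ ((X_1−X_2+X_3)/(−X_1−X_2+X_3)) · (X_1+X_2)/X_3 ≥ (X_1+X_2)/X_3. In particular the ratio (X_1+X_2)/X_3 is nondecreasing under the switch in this regime. -/
/-! The switch divides all three coordinates by the same `X₄`, so the ratio compares
`(-X₁ + X₂ + X₃) X₁ + (X₁ - X₂ + X₃) X₂` with `(X₁ - X₂ + X₃)(X₁ + X₂)`, whose difference is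
`2 X₁ (X₂ - X₁) ≥ 0`; the prefactor `(X₁ - X₂ + X₃)/(X₃ - X₁ - X₂)` is at least `1` because
its numerator exceeds its denominator by `2 X₁`. -/

theorem add_div_div_div_cancel_right₀ {α : Type*} [DivisionRing α] (a b c : α) {d : α}
    (hd : d ≠ 0) : (a / d + b / d) / (c / d) = (a + b) / c := by
  rw [← add_div, div_div_div_cancel_right₀ hd]

theorem le_switch_numerator {x y z : ℝ} (hx : 0 ≤ x) (hxy : x ≤ y) :
    (x - y + z) * (x + y) ≤ (-x + y + z) * x + (x - y + z) * y := by
  nlinarith [mul_nonneg hx (sub_nonneg.2 hxy)]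

theorem stmt6_general (X1 X2 X3 X4 : ℝ)
    (h1 : 0 < X1) (h4 : 0 < X4)
    (h12 : X1 ≤ X2) (hII : X1 + X2 < X3) :
    let X1' := (-X1 + X2 + X3) * X1 / X4
    let X2' := (X1 - X2 + X3) * X2 / X4
    let X3' := (X3 - X1 - X2) * X3 / X4
    (X1' + X2') / X3' ≥
        ((X1 - X2 + X3) / (-X1 - X2 + X3)) * ((X1 + X2) / X3) ∧
      ((X1 - X2 + X3) / (-X1 - X2 + X3)) * ((X1 + X2) / X3) ≥ (X1 + X2) / X3 := by
  intro X1' X2' X3'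
  have hgap : 0 < -X1 - X2 + X3 := by linarith
  have hsum : 0 < X1 + X2 := by linarith
  have h3 : 0 < X3 := by linarith
  have hfactor : 1 ≤ (X1 - X2 + X3) / (-X1 - X2 + X3) := (one_le_div hgap).2 (by linarith)
  refine ⟨?_, le_mul_of_one_le_left (div_pos hsum h3).le hfactor⟩
  rw [ge_iff_le, ← mul_div_mul_comm, add_div_div_div_cancel_right₀ _ _ _ h4.ne',
    show X3 - X1 - X2 = -X1 - X2 + X3 by ring]
  exact div_le_div_of_nonneg_right (le_switch_numerator h1.le h12) (mul_pos hgap h3).le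

/-- In Case II (X₁ + X₂ < X₃), the ratio (X₁+X₂)/X₃ is nondecreasing under the
triangle switch: (X₁'+X₂')/X₃' ≥ ((X₁−X₂+X₃)/(−X₁−X₂+X₃))·(X₁+X₂)/X₃ ≥ (X₁+X₂)/X₃. -/
theorem stmt6 (X1 X2 X3 X4 : ℝ)
    (h1 : 0 < X1) (h2 : 0 < X2) (h3 : 0 < X3) (h4 : 0 < X4)
    (h12 : X1 ≤ X2) (h23 : X2 ≤ X3) (h34 : X3 ≤ X4)
    (hmax : X1 + X2 + X3 ≤ X4) (hII : X1 + X2 < X3) :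
    let X1' := (-X1 + X2 + X3) * X1 / X4
    let X2' := (X1 - X2 + X3) * X2 / X4
    let X3' := (X3 - X1 - X2) * X3 / X4
    (X1' + X2') / X3' ≥
        ((X1 - X2 + X3) / (-X1 - X2 + X3)) * ((X1 + X2) / X3) ∧
      ((X1 - X2 + X3) / (-X1 - X2 + X3)) * ((X1 + X2) / X3) ≥ (X1 + X2) / X3 :=
  stmt6_general X1 X2 X3 X4 h1 h4 h12 hII
end

section
/- Let a, b, c, d > 0 with a + b + c + d = 1 and d > 1/2. Define a' = M a, b' = M b, c' = M c, d' = M (a+b−c)²/d, where M = 1/(a + b + c + (a+b−c)²/d). Then a' + b' + c' + d' = 1 and 1 − (c + d) < c' + d' < c + d; i.e., |c' + d' − 1/2| < |c + d − 1/2|. -/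
/-!
Write `x = a + b`, so that `x + c + d = 1`, and `e = (x - c)² / d`. Then `c' + d' = (c + e) / (x + c + e)`,
and clearing denominators turns the two bounds into the identities
`(c + e) - x (x + c + e) = c (1 - 2x)² / d` and `(c + d)(x + c + e) - (c + e) = x (d² - (x - c)²) / d`.
Since `d > 1/2` forces `x + c < 1/2 < d`, both right-hand sides are positive.
-/

noncomputable def switchMass (x c d : ℝ) : ℝ :=
  (c + (x - c) ^ 2 / d) / (x + c + (x - c) ^ 2 / d)

section SwitchMass

variable {x c d : ℝ}

lemma switchMass_sub_mul_denom (hd : d ≠ 0) (hsum : x + c + d = 1) :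
    (c + (x - c) ^ 2 / d) - x * (x + c + (x - c) ^ 2 / d) = c * (1 - 2 * x) ^ 2 / d := by
  obtain rfl : d = 1 - x - c := by linarith
  field_simp
  ring

lemma mul_denom_sub_switchMass (hd : d ≠ 0) (hsum : x + c + d = 1) :
    (c + d) * (x + c + (x - c) ^ 2 / d) - (c + (x - c) ^ 2 / d) = x * (d ^ 2 - (x - c) ^ 2) / d := by
  obtain rfl : d = 1 - x - c := by linarith
  field_simp
  ring

lemma switchMass_denom_pos (hx : 0 < x) (hc : 0 ≤ c) (hd : 0 < d) :
    0 < x + c + (x - c) ^ 2 / d := by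
  positivity

lemma lt_switchMass (hx : 0 < x) (hc : 0 < c) (hd : 0 < d) (hsum : x + c + d = 1)
    (hhalf : 1 / 2 < d) : 1 - (c + d) < switchMass x c d := by
  have hx_ne : 1 - 2 * x ≠ 0 := by linarith
  rw [switchMass, lt_div_iff₀ (switchMass_denom_pos hx hc.le hd), show 1 - (c + d) = x by linarith,
    ← sub_pos, switchMass_sub_mul_denom hd.ne' hsum]
  positivity

lemma switchMass_lt (hx : 0 < x) (hc : 0 ≤ c) (hd : 0 < d) (hsum : x + c + d = 1)
    (hhalf : 1 / 2 < d) : switchMass x c d < c + d := by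
  have hdiff : (x - c) ^ 2 < d ^ 2 := by
    rw [sq_lt_sq, abs_of_pos hd, abs_lt]
    constructor <;> linarith
  rw [switchMass, div_lt_iff₀ (switchMass_denom_pos hx hc hd), ← sub_pos,
    mul_denom_sub_switchMass hd.ne' hsum]
  exact div_pos (mul_pos hx (sub_pos.2 hdiff)) hd

end SwitchMass

lemma abs_sub_half_lt_abs_sub_half {s t : ℝ} (hlow : 1 - t < s) (hup : s < t) :
    |s - 1 / 2| < |t - 1 / 2| :=
  calc |s - 1 / 2| < t - 1 / 2 := abs_sub_lt_iff.2 ⟨by linarith, by linarith⟩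
    _ ≤ |t - 1 / 2| := le_abs_self _

/-- Step 2 of the Euler-class-0 termination proof: the normalized triangle switch
preserves the simplex and strictly decreases |c + d − 1/2| when d > 1/2. -/
theorem stmt9 (a b c d : ℝ)
    (ha : 0 < a) (hb : 0 < b) (hc : 0 < c) (hd : 0 < d)
    (hsum : a + b + c + d = 1) (hhalf : d > 1 / 2) :
    let M := 1 / (a + b + c + (a + b - c) ^ 2 / d)
    let a' := M * a
    let b' := M * b
    let c' := M * c
    let d' := M * ((a + b - c) ^ 2 / d)
    a' + b' + c' + d' = 1 ∧ 1 - (c + d) < c' + d' ∧ c' + d' < c + d ∧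
      |c' + d' - 1 / 2| < |c + d - 1 / 2| := by
  intro M a' b' c' d'
  have hx : 0 < a + b := add_pos ha hb
  have hdenom := (switchMass_denom_pos hx hc.le hd).ne'
  have htotal : a' + b' + c' + d' = 1 := by
    simp only [a', b', c', d', M]
    field_simp
  have hmass : c' + d' = switchMass (a + b) c d := by
    simp only [c', d', M, switchMass]
    field_simp
  have hlow : 1 - (c + d) < c' + d' := hmass ▸ lt_switchMass hx hc hd hsum hhalf
  have hup : c' + d' < c + d := hmass ▸ switchMass_lt hx hc.le hd hsum hhalf
  exact ⟨htotal, hlow, hup, abs_sub_half_lt_abs_sub_half hlow hup⟩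
end

section
/- Let a, b, c, d > 0 with a + b + c + d = 1 and d > 1/2. Then a + b + (a+b)·d/(d(1−d) + (1−2c−d)²) = 1 − (4c³ + 4c²(2d−1) + c(2d−1)²)/(d(1−d) + (1−2c−d)²) < 1. -/
/-!
With `s = a + b = 1 - c - d` and `D = d(1 - d) + (1 - 2c - d)²`, clearing the denominator turns the
identity into `(c + d) D - s d = c (2c + 2d - 1)²`, a polynomial identity in `c, d`. Both `D` and this
numerator are positive once `1/2 < d < 1` and `0 < c`, which gives the bound `< 1`.
-/

theorem cubic_eq_mul_sq (c d : ℝ) :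
    4 * c ^ 3 + 4 * c ^ 2 * (2 * d - 1) + c * (2 * d - 1) ^ 2 = c * (2 * c + 2 * d - 1) ^ 2 := by
  ring

theorem add_mul_div_eq_one_sub_div {s c d : ℝ} (hs : s = 1 - c - d)
    (hD : d * (1 - d) + (1 - 2 * c - d) ^ 2 ≠ 0) :
    s + s * d / (d * (1 - d) + (1 - 2 * c - d) ^ 2) =
      1 - (4 * c ^ 3 + 4 * c ^ 2 * (2 * d - 1) + c * (2 * d - 1) ^ 2) /
        (d * (1 - d) + (1 - 2 * c - d) ^ 2) := by
  have hnum : 4 * c ^ 3 + 4 * c ^ 2 * (2 * d - 1) + c * (2 * d - 1) ^ 2 =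
      (c + d) * (d * (1 - d) + (1 - 2 * c - d) ^ 2) - s * d := by
    rw [hs]; ring
  rw [hnum, sub_div, mul_div_cancel_right₀ _ hD]
  linarith

theorem mul_one_sub_add_sq_pos {c d : ℝ} (hd₀ : 0 < d) (hd₁ : d < 1) :
    0 < d * (1 - d) + (1 - 2 * c - d) ^ 2 :=
  add_pos_of_pos_of_nonneg (mul_pos hd₀ (sub_pos.2 hd₁)) (sq_nonneg _)

theorem cubic_pos {c d : ℝ} (hc : 0 < c) (hd : 1 / 2 < d) :
    0 < 4 * c ^ 3 + 4 * c ^ 2 * (2 * d - 1) + c * (2 * d - 1) ^ 2 := by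
  rw [cubic_eq_mul_sq]
  exact mul_pos hc (pow_pos (by linarith) 2)

theorem stmt10_general (a b c d : ℝ)
    (ha : 0 < a) (hb : 0 < b) (hc : 0 < c)
    (hsum : a + b + c + d = 1) (hhalf : d > 1 / 2) :
    a + b + (a + b) * d / (d * (1 - d) + (1 - 2 * c - d) ^ 2) =
      1 - (4 * c ^ 3 + 4 * c ^ 2 * (2 * d - 1) + c * (2 * d - 1) ^ 2) /
        (d * (1 - d) + (1 - 2 * c - d) ^ 2) ∧
    a + b + (a + b) * d / (d * (1 - d) + (1 - 2 * c - d) ^ 2) < 1 := by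
  have hD := mul_one_sub_add_sq_pos (c := c) (by linarith) (by linarith : d < 1)
  have key := add_mul_div_eq_one_sub_div (s := a + b) (by linarith) hD.ne'
  exact ⟨key, key ▸ sub_lt_self 1 (div_pos (cubic_pos hc hhalf) hD)⟩

/-- Algebraic identity from Step 2 of the Euler-class-0 termination proof. -/
theorem stmt10 (a b c d : ℝ)
    (ha : 0 < a) (hb : 0 < b) (hc : 0 < c) (hd : 0 < d)
    (hsum : a + b + c + d = 1) (hhalf : d > 1 / 2) :
    a + b + (a + b) * d / (d * (1 - d) + (1 - 2 * c - d) ^ 2) =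
      1 - (4 * c ^ 3 + 4 * c ^ 2 * (2 * d - 1) + c * (2 * d - 1) ^ 2) /
        (d * (1 - d) + (1 - 2 * c - d) ^ 2) ∧
    a + b + (a + b) * d / (d * (1 - d) + (1 - 2 * c - d) ^ 2) < 1 :=
  stmt10_general a b c d ha hb hc hsum hhalf
end

section
/- Let a, b, c, d be purely-imaginary-trace parameters, i.e., real numbers, and x, y, z real numbers satisfying −a²−b²−c²−d²+x²+y²+z²+(ab+cd)x+(ad+bc)y+(ac+bd)z+abcd+xyz−4 = 0. If x = y = z = 2, then (a+b−(c+d))² = (ab+4)(cd+4), (a+c−(b+d))² = (ac+4)(bd+4), and (a+d−(b+c))² = (ad+4)(bc+4). -/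
/-- The trace relation for the free group on three generators, specialized at
x = y = z = 2, factorizes in three equivalent ways. -/
theorem stmt11 (a b c d x y z : ℝ)
    (hrel : -a ^ 2 - b ^ 2 - c ^ 2 - d ^ 2 + x ^ 2 + y ^ 2 + z ^ 2 +
      (a * b + c * d) * x + (a * d + b * c) * y + (a * c + b * d) * z +
      a * b * c * d + x * y * z - 4 = 0)
    (hx : x = 2) (hy : y = 2) (hz : z = 2) :
    (a + b - (c + d)) ^ 2 = (a * b + 4) * (c * d + 4) ∧
    (a + c - (b + d)) ^ 2 = (a * c + 4) * (b * d + 4) ∧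
    (a + d - (b + c)) ^ 2 = (a * d + 4) * (b * c + 4) := by
  subst hx hy hz
  -- At x = y = z = 2 the left side of `hrel` is (ab + 4)(cd + 4) - (a + b - (c + d))², and it is
  -- invariant under permuting a, b, c, d, so it equals the same expression for each of the pairings.
  exact ⟨by linear_combination -hrel, by linear_combination -hrel, by linear_combination -hrel⟩
end

section
/- For positive reals X_1, X_2, X_3, X_4 and a partition {i,j} ∪ {k,l} = {1,2,3,4}, the inequality |(X_i + X_j − (X_k + X_l))² − 2 X_k X_l| / (X_k X_l) ≤ 2 holds if and only if √X_k ≤ √X_l + √(X_i+X_j), √X_l ≤ √X_k + √(X_i+X_j), and √(X_i+X_j) ≤ √X_k + √X_l, where the numerator uses the signed combination (ε_1 X_1 + ε_2 X_2 + ε_3 X_3 + ε_4 X_4)² with ε_i = ε_j = +1 and ε_k = ε_l = −1. -/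
/-! With `a = √(Xᵢ + Xⱼ)`, `b = √Xₖ`, `c = √Xₗ`, the trace bound says
`(a² - b² - c²)² ≤ (2bc)²`, i.e. `(b - c)² ≤ a² ≤ (b + c)²`, which is `|b - c| ≤ a ≤ b + c`. -/

open Real

theorem abs_sq_sub_le_self_iff (x q : ℝ) : |x ^ 2 - q| ≤ q ↔ x ^ 2 ≤ 2 * q := by
  rw [abs_le]
  exact ⟨fun h ↦ by linarith [h.2], fun h ↦ ⟨by linarith [sq_nonneg x], by linarith⟩⟩

theorem sq_sub_sq_sub_sq_le_iff {a b c : ℝ} (ha : 0 ≤ a) (hb : 0 ≤ b) (hc : 0 ≤ c) :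
    (a ^ 2 - b ^ 2 - c ^ 2) ^ 2 ≤ (2 * b * c) ^ 2 ↔
      b ≤ c + a ∧ c ≤ b + a ∧ a ≤ b + c := by
  have lower : -(2 * b * c) ≤ a ^ 2 - b ^ 2 - c ^ 2 ↔ b ≤ c + a ∧ c ≤ b + a := by
    rw [show (-(2 * b * c) ≤ a ^ 2 - b ^ 2 - c ^ 2 ↔ (b - c) ^ 2 ≤ a ^ 2) by
        constructor <;> intro h <;> linarith,
      sq_le_sq, abs_of_nonneg ha, abs_sub_le_iff]
    constructor <;> rintro ⟨h₁, h₂⟩ <;> constructor <;> linarith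
  have upper : a ^ 2 - b ^ 2 - c ^ 2 ≤ 2 * b * c ↔ a ≤ b + c := by
    rw [show (a ^ 2 - b ^ 2 - c ^ 2 ≤ 2 * b * c ↔ a ^ 2 ≤ (b + c) ^ 2) by
        constructor <;> intro h <;> linarith,
      sq_le_sq₀ ha (add_nonneg hb hc)]
  rw [sq_le_sq, abs_of_nonneg (by positivity : 0 ≤ 2 * b * c), abs_le, lower, upper, and_assoc]

theorem sq_sub_add_le_four_mul_iff_sqrt {x y z : ℝ} (hx : 0 ≤ x) (hy : 0 ≤ y) (hz : 0 ≤ z) :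
    (x - (y + z)) ^ 2 ≤ 4 * (y * z) ↔
      √y ≤ √z + √x ∧ √z ≤ √y + √x ∧ √x ≤ √y + √z := by
  rw [← sq_sub_sq_sub_sq_le_iff (sqrt_nonneg x) (sqrt_nonneg y) (sqrt_nonneg z),
    sq_sqrt hx, sq_sqrt hy, sq_sqrt hz, mul_pow, mul_pow, sq_sqrt hy, sq_sqrt hz]
  ring_nf

/-- Euler class 0 trace criterion: for a partition {i,j} ∪ {k,l} of the four
triangle coordinates, |((Xᵢ+Xⱼ)−(Xₖ+Xₗ))² − 2XₖXₗ|/(XₖXₗ) ≤ 2 iff the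
square-root triangle inequalities hold among √Xₖ, √Xₗ, √(Xᵢ+Xⱼ). -/
theorem stmt14 (Xi Xj Xk Xl : ℝ)
    (hi : 0 < Xi) (hj : 0 < Xj) (hk : 0 < Xk) (hl : 0 < Xl) :
    |(Xi + Xj - (Xk + Xl)) ^ 2 - 2 * (Xk * Xl)| / (Xk * Xl) ≤ 2 ↔
      (Real.sqrt Xk ≤ Real.sqrt Xl + Real.sqrt (Xi + Xj) ∧
       Real.sqrt Xl ≤ Real.sqrt Xk + Real.sqrt (Xi + Xj) ∧
       Real.sqrt (Xi + Xj) ≤ Real.sqrt Xk + Real.sqrt Xl) := by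
  rw [div_le_iff₀ (mul_pos hk hl), abs_sq_sub_le_self_iff, ← mul_assoc,
    show (2 : ℝ) * 2 = 4 by norm_num]
  exact sq_sub_add_le_four_mul_iff_sqrt (by positivity) hk.le hl.le
end

section
/- For positive reals λ(e_1), ..., λ(e_6) (the λ-lengths of a balanced triangulation) and a sign vector ε ∈ {±1}^4 with all ε(t_i) = +1, and a second sign vector ε' ∈ {±1}^4 with at least one negative entry, the trace formula value |tr(M_{ε'}(t_{j_1})⋯M_{ε'}(t_{j_m}))|/(λ(e_{i_1})⋯λ(e_{i_m})) for any closed curve is at most the corresponding value computed with ε, where M_ε(t) is the upper- or lower-triangular matrix with diagonal entries λ(e_1), λ(e_2) and off-diagonal entry ε(t)λ(e_3). Concretely: for matrices of the form [[λ_1, ε σ_3],[0, λ_2]] or [[λ_2, 0],[ε σ_3, λ_1]] with all λ_i, σ_3 > 0 and ε ∈ {±1}, the trace of a product of such matrices is a polynomial in the entries with each monomial carrying a product of the ε's as coefficient, so replacing all ε's by +1 gives a value at least as large in absolute value. -/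
/-!
The triangular matrices with all signs `+1` are the entrywise absolute values of those with
arbitrary signs `±1`. Entrywise domination `|A i j| ≤ B i j` is preserved by matrix products,
since an entry of a product is a sum of products of entries, so by the triangle inequality it
passes to the whole product and then to its trace.
-/

open Matrix

namespace Matrix

variable {n R : Type*} [Ring R] [LinearOrder R]

def AbsLE (A B : Matrix n n R) : Prop :=
  ∀ i j, |A i j| ≤ B i j

theorem absLE_fin_two_of {a b c d a' b' c' d' : R} (ha : |a| ≤ a') (hb : |b| ≤ b') (hc : |c| ≤ c')
    (hd : |d| ≤ d') : AbsLE !![a, b; c, d] !![a', b'; c', d'] := by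
  intro i j
  fin_cases i <;> fin_cases j <;> assumption

variable [Fintype n] [IsStrictOrderedRing R]

theorem AbsLE.mul {A B C D : Matrix n n R} (hAB : AbsLE A B) (hCD : AbsLE C D) :
    AbsLE (A * C) (B * D) := fun i j =>
  calc |(A * C) i j| ≤ ∑ k, |A i k| * |C k j| := by
        simpa only [mul_apply, abs_mul] using Finset.abs_sum_le_sum_abs (fun k => A i k * C k j) _
    _ ≤ (B * D) i j :=
        Finset.sum_le_sum fun k _ =>
          mul_le_mul (hAB i k) (hCD k j) (abs_nonneg _) ((abs_nonneg _).trans (hAB i k))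

theorem AbsLE.list_prod [DecidableEq n] {l₁ l₂ : List (Matrix n n R)}
    (h : List.Forall₂ AbsLE l₁ l₂) : AbsLE l₁.prod l₂.prod := by
  induction h with
  | nil => intro i j; rw [List.prod_nil, one_apply]; split_ifs <;> simp
  | cons hAB _ ih => simpa only [List.prod_cons] using hAB.mul ih

theorem AbsLE.abs_trace_le {A B : Matrix n n R} (h : AbsLE A B) : |A.trace| ≤ |B.trace| :=
  calc |A.trace| ≤ ∑ i, |A i i| := Finset.abs_sum_le_sum_abs _ _
    _ ≤ B.trace := Finset.sum_le_sum fun i _ => h i i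
    _ ≤ |B.trace| := le_abs_self _

end Matrix

/-- Domination: for products of triangular matrices with positive diagonal
entries λ₁, λ₂ and off-diagonal entry ε·σ with ε = ±1, the absolute value of
the trace with arbitrary signs ε is at most the absolute value of the trace
with all signs +1. -/
theorem stmt19 (m : ℕ) (lam1 lam2 sig : Fin m → ℝ) (form : Fin m → Bool)
    (ε : Fin m → ℝ)
    (hlam1 : ∀ i, 0 < lam1 i) (hlam2 : ∀ i, 0 < lam2 i)
    (hsig : ∀ i, 0 < sig i) (hε : ∀ i, ε i = 1 ∨ ε i = -1) :
    let M : (Fin m → ℝ) → Fin m → Matrix (Fin 2) (Fin 2) ℝ := fun e i =>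
      if form i then !![lam1 i, e i * sig i; 0, lam2 i]
      else !![lam2 i, 0; e i * sig i, lam1 i]
    |((List.ofFn (M ε)).prod).trace| ≤
      |((List.ofFn (M fun _ => 1)).prod).trace| := by
  intro M
  have hoff : ∀ k, |ε k * sig k| ≤ 1 * sig k := fun k => by
    rcases hε k with h | h <;> simp [h, abs_of_pos (hsig k)]
  have hdiag : ∀ x : ℝ, 0 < x → |x| ≤ x := fun x hx => (abs_of_pos hx).le
  have hfactor : ∀ k, AbsLE (M ε k) (M (fun _ => 1) k) := fun k => by
    dsimp only [M]
    cases form k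
    · simpa only [Bool.false_eq_true, if_false] using
        absLE_fin_two_of (hdiag _ (hlam2 k)) (by simp) (hoff k) (hdiag _ (hlam1 k))
    · simpa only [if_true] using
        absLE_fin_two_of (hdiag _ (hlam1 k)) (hoff k) (by simp) (hdiag _ (hlam2 k))
  refine (AbsLE.list_prod ?_).abs_trace_le
  exact List.forall₂_iff_get.2 ⟨by simp, fun i hi _ => by simpa using hfactor ⟨i, by simpa using hi⟩⟩
end
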